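/- For every integer n ≥ 1 and all elements x, y, z₁, z₂ of a commutative ring, the doubly-refined DPP generating function is symmetric in its last two arguments: Z^DPP_n(x,y,z₁,z₂) = Z^DPP_n(x,y,z₂,z₁). Equivalently, for all integers p, m, k₁, k₂, the number of descending plane partitions D with each part at most n satisfying ν(D) = p, μ(D) = m, ρ₁(D) = k₁, ρ₂(D) = k₂ equals the number with ν(D) = p, μ(D) = m, ρ₁(D) = k₂, ρ₂(D) = k₁. -/

import Mathlib

/-!
The first row of a DPP in `DPP(n)` has the shape `n^a (n-1)^b s` with all parts of `s` below
`n - 1`, no other row contains a part `n`, and only the second row can contain parts `n - 1`.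
Hence `ρ₁ = a` and `ρ₂ = b + e`, where `e` is the number of parts `n - 1` in the second row, plus
one if the first row has length `n - 1`; the DPP conditions force `e ≤ a`. Replacing the first
row by `n^(b+e) (n-1)^(a-e) s` gives again a DPP with the same `e`, so this is an involution of
`DPP(n)` exchanging `ρ₁` and `ρ₂`. It preserves `ν` and `μ`: the parts it changes are at least
`n - 1`, whereas their offsets in the row are below the row length, which is at most `n - 1`.
-/

namespace ASMDPP

/-- The part of `D` in row `i`, offset `k` (both 0-indexed); this is the part
`D_{i+1, i+1+k}` (in column `j = i + 1 + k`) of the descending plane partition,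
and `0` if absent. -/
def dppPart (D : List (List ℕ)) (i k : ℕ) : ℕ := (D.getD i []).getD k 0

/-- `D` is a descending plane partition with all parts at most `n`, presented as the
list of its rows: row `i` (1-indexed) occupies columns `i, …, i + λ_i - 1` and is
recorded as a list of length `λ_i`.  The conditions are: rows are nonempty lists of
parts `1 ≤ a ≤ n`, weakly decreasing along each row; parts strictly decrease down
columns; and `D_{ii} > λ_i ≥ D_{i+1,i+1}` for each row `i`. -/
def IsDPP (n : ℕ) (D : List (List ℕ)) : Prop :=
  (∀ r ∈ D, r ≠ [] ∧ r.Chain' (· ≥ ·) ∧ ∀ a ∈ r, 1 ≤ a ∧ a ≤ n) ∧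
  (∀ i k, dppPart D (i + 1) k ≠ 0 → dppPart D (i + 1) k < dppPart D i (k + 1)) ∧
  (∀ i, i < D.length → (D.getD i []).length < dppPart D i 0) ∧
  (∀ i, dppPart D (i + 1) 0 ≤ (D.getD i []).length)

/-- The set of descending plane partitions with each part at most `n`. -/
def DPPs (n : ℕ) : Set (List (List ℕ)) := {D | IsDPP n D}

/-- `ν(D)`: the number of nonspecial parts of `D`, i.e. parts with `D_{ij} > j - i`
(the part at offset `k` of a row lies in column `j = i + k`, so this reads `part > k`). -/
def nuD (D : List (List ℕ)) : ℕ :=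
  ∑ i ∈ Finset.range D.length,
    ((Finset.range (D.getD i []).length).filter (fun k => k < dppPart D i k)).card

/-- `μ(D)`: the number of special parts of `D`, i.e. parts with `D_{ij} ≤ j - i`. -/
def muD (D : List (List ℕ)) : ℕ :=
  ∑ i ∈ Finset.range D.length,
    ((Finset.range (D.getD i []).length).filter (fun k => dppPart D i k ≤ k)).card

/-- `ρ₁(D)`: the number of parts of `D` equal to `n`. -/
def rho1D (n : ℕ) (D : List (List ℕ)) : ℕ := (D.map fun r => r.count n).sum

/-- `ρ₂(D)`: the number of parts of `D` equal to `n - 1` plus the number of rows of `D`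
of length `n - 1`. -/
def rho2D (n : ℕ) (D : List (List ℕ)) : ℕ :=
  (D.map fun r => r.count (n - 1)).sum + (D.filter fun r => r.length = n - 1).length

/-- The doubly-refined DPP generating function `Z^DPP_n(x,y,z₁,z₂)`. -/
noncomputable def ZDPP2 {R : Type*} [CommRing R] (n : ℕ) (x y z₁ z₂ : R) : R :=
  ∑ᶠ D ∈ DPPs n, x ^ nuD D * y ^ muD D * z₁ ^ rho1D n D * z₂ ^ rho2D n D

/-- The singly-refined DPP generating function `Z^DPP_n(x,y,z) = Z^DPP_n(x,y,z,1)`. -/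
noncomputable def ZDPP1 {R : Type*} [CommRing R] (n : ℕ) (x y z : R) : R :=
  ZDPP2 n x y z 1

theorem exists_eq_replicate_append {α : Type*} [LinearOrder α] {l : List α} {v : α}
    (hl : l.Pairwise (· ≥ ·)) (hv : ∀ x ∈ l, x ≤ v) :
    ∃ k s, (∀ x ∈ s, x < v) ∧ l = List.replicate k v ++ s := by
  induction l with
  | nil => exact ⟨0, [], by simp, rfl⟩
  | cons x t ih =>
    obtain ⟨hxt, ht⟩ := List.pairwise_cons.mp hl
    rcases (hv x List.mem_cons_self).lt_or_eq with hx | rfl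
    · refine ⟨0, x :: t, fun y hy => ?_, rfl⟩
      rcases List.mem_cons.mp hy with rfl | hy
      exacts [hx, (hxt y hy).trans_lt hx]
    · obtain ⟨k, s, hs, rfl⟩ := ih ht hxt
      exact ⟨k + 1, s, hs, rfl⟩

theorem count_replicate_append {α : Type*} [DecidableEq α] {s : List α} {v : α} (hv : v ∉ s)
    (k : ℕ) : (List.replicate k v ++ s).count v = k := by
  simp [List.count_eq_zero.mpr hv]

theorem getD_replicate_append {α : Type*} (k : ℕ) (v : α) (s : List α) (i : ℕ) (d : α) :
    (List.replicate k v ++ s).getD i d = if i < k then v else s.getD (i - k) d := by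
  split_ifs with h
  · rw [List.getD_append _ _ _ _ (by simpa using h)]
    simp [List.getD, h]
  · rw [List.getD_append_right _ _ _ _ (by simpa using h), List.length_replicate]

theorem getD_lt_of_forall_lt {s : List ℕ} {m : ℕ} (hs : ∀ x ∈ s, x < m) (hm : 0 < m) (k : ℕ) :
    s.getD k 0 < m := by
  by_cases hk : k < s.length
  · rw [List.getD_eq_getElem _ _ hk]
    exact hs _ (List.getElem_mem hk)
  · rwa [List.getD_eq_default _ _ (not_lt.mp hk)]

theorem le_getD_zero_of_pairwise {r : List ℕ} (hr : r.Pairwise (· ≥ ·)) {x : ℕ} (hx : x ∈ r) :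
    x ≤ r.getD 0 0 := by
  cases r with
  | nil => simp at hx
  | cons y t =>
    rcases List.mem_cons.mp hx with rfl | hx
    exacts [le_rfl, List.rel_of_pairwise_cons hr hx]

theorem forall_nat_iff_zero_and_succ {P : ℕ → Prop} : (∀ i, P i) ↔ P 0 ∧ ∀ i, P (i + 1) :=
  ⟨fun h => ⟨h 0, fun _ => h _⟩, fun h i => i.casesOn h.1 h.2⟩

section

variable {n p q : ℕ} {s : List ℕ}

def topRow (n p q : ℕ) (s : List ℕ) : List ℕ :=
  List.replicate p n ++ (List.replicate q (n - 1) ++ s)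

theorem length_topRow : (topRow n p q s).length = p + q + s.length := by
  simp [topRow, Nat.add_assoc]

theorem getD_topRow (k : ℕ) : (topRow n p q s).getD k 0 =
    if k < p then n else if k < p + q then n - 1 else s.getD (k - (p + q)) 0 := by
  rw [topRow, getD_replicate_append, getD_replicate_append]
  split_ifs <;> first | omega | rfl | (congr 1; omega)

theorem count_topRow_self (hn : 0 < n) (hs : ∀ x ∈ s, x < n - 1) :
    (topRow n p q s).count n = p := by
  refine count_replicate_append (fun h => ?_) p
  rcases List.mem_append.mp h with h | h
  · have := List.eq_of_mem_replicate h
    omega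
  · have := hs n h
    omega

theorem count_topRow_sub_one (hn : 0 < n) (hs : ∀ x ∈ s, x < n - 1) :
    (topRow n p q s).count (n - 1) = q := by
  rw [topRow, List.count_append, count_replicate_append (fun h => (hs _ h).false),
    List.count_eq_zero.mpr fun h => by have := List.eq_of_mem_replicate h; omega, zero_add]

theorem min_getD_topRow {a b : ℕ} (h : p + q = a + b) (k : ℕ) :
    min ((topRow n p q s).getD k 0) (n - 1) = min ((topRow n a b s).getD k 0) (n - 1) := by
  rw [getD_topRow, getD_topRow, h]
  split_ifs <;> omega

theorem pairwise_topRow (hs : s.Pairwise (· ≥ ·)) (hsn : ∀ x ∈ s, x ≤ n - 1) :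
    (topRow n p q s).Pairwise (· ≥ ·) := by
  simp only [topRow, List.pairwise_append, List.pairwise_replicate, List.mem_append,
    List.mem_replicate]
  refine ⟨by simp, ⟨by simp, hs, ?_⟩, ?_⟩ <;> grind

theorem drop_topRow : (topRow n p q s).drop (p + q) = s := by
  rw [topRow, ← List.append_assoc]
  exact List.drop_left' (by simp)

theorem exists_eq_topRow (hn : 0 < n) {r : List ℕ} (hr : r.Pairwise (· ≥ ·))
    (hrn : ∀ x ∈ r, x ≤ n) : ∃ a b s, (∀ x ∈ s, x < n - 1) ∧ r = topRow n a b s := by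
  obtain ⟨a, r₁, hr₁, rfl⟩ := exists_eq_replicate_append hr hrn
  obtain ⟨b, s, hs, rfl⟩ := exists_eq_replicate_append (v := n - 1)
    (List.pairwise_append.mp hr).2.1 (fun x hx => by have := hr₁ x hx; omega)
  exact ⟨a, b, s, hs, rfl⟩

def IsFirstRow (n : ℕ) (r r₂ : List ℕ) : Prop :=
  (r ≠ [] ∧ r.Pairwise (· ≥ ·) ∧ ∀ a ∈ r, 1 ≤ a ∧ a ≤ n) ∧ r.length < r.getD 0 0 ∧
    r₂.getD 0 0 ≤ r.length ∧ ∀ k, r₂.getD k 0 ≠ 0 → r₂.getD k 0 < r.getD (k + 1) 0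

set_option linter.deprecated false in
theorem isDPP_cons_iff {r : List ℕ} {rs : List (List ℕ)} :
    IsDPP n (r :: rs) ↔ IsFirstRow n r (rs.getD 0 []) ∧ IsDPP n rs := by
  unfold IsDPP IsFirstRow
  rw [forall_nat_iff_zero_and_succ (P := fun i => ∀ k, dppPart (r :: rs) (i + 1) k ≠ 0 → _),
    forall_nat_iff_zero_and_succ (P := fun i => i < (r :: rs).length → _),
    forall_nat_iff_zero_and_succ (P := fun i => dppPart (r :: rs) (i + 1) 0 ≤ _)]
  simp only [List.forall_mem_cons, List.Chain', List.isChain_iff_pairwise, dppPart,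
    List.getD_cons_zero, List.getD_cons_succ, List.length_cons]
  grind

theorem IsFirstRow.getD_zero_le {r r₂ : List ℕ} (h : IsFirstRow n r r₂) : r.getD 0 0 ≤ n := by
  obtain ⟨⟨hne, -, hbd⟩, -⟩ := h
  obtain ⟨y, t, rfl⟩ := List.exists_cons_of_ne_nil hne
  exact (hbd y List.mem_cons_self).2

theorem IsFirstRow.length_lt {r r₂ : List ℕ} (h : IsFirstRow n r r₂) : r.length < n :=
  h.2.1.trans_le h.getD_zero_le

theorem IsDPP.pos_of_cons {r : List ℕ} {rs : List (List ℕ)} (hD : IsDPP n (r :: rs)) : 0 < n :=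
  Nat.zero_lt_of_lt (isDPP_cons_iff.mp hD).1.length_lt

theorem IsDPP.le_head {D : List (List ℕ)} (hD : IsDPP n D) {r : List ℕ} (hr : r ∈ D) {x : ℕ}
    (hx : x ∈ r) : x ≤ (D.getD 0 []).getD 0 0 := by
  induction D with
  | nil => simp at hr
  | cons r₀ rs ih =>
    obtain ⟨h₀, hrs⟩ := isDPP_cons_iff.mp hD
    rcases List.mem_cons.mp hr with rfl | hr
    · exact le_getD_zero_of_pairwise h₀.1.2.1 hx
    · exact (ih hrs hr).trans (h₀.2.2.1.trans h₀.2.1.le)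

theorem IsDPP.of_forall_le {D : List (List ℕ)} {m : ℕ} (hD : IsDPP n D)
    (h : ∀ r ∈ D, ∀ x ∈ r, x ≤ m) : IsDPP m D :=
  ⟨fun r hr => ⟨(hD.1 r hr).1, (hD.1 r hr).2.1, fun x hx => ⟨((hD.1 r hr).2.2 x hx).1,
    h r hr x hx⟩⟩, hD.2⟩

theorem IsDPP.tail {r : List ℕ} {rs : List (List ℕ)} (hD : IsDPP n (r :: rs)) :
    IsDPP (n - 1) rs := by
  obtain ⟨h₀, hrs⟩ := isDPP_cons_iff.mp hD
  refine hrs.of_forall_le fun r' hr' x hx => ?_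
  have := hrs.le_head hr' hx
  have := h₀.2.2.1
  have := h₀.length_lt
  omega

theorem IsDPP.length_lt {D : List (List ℕ)} (hD : IsDPP n D) {r : List ℕ} (hr : r ∈ D) :
    r.length < n := by
  induction D with
  | nil => simp at hr
  | cons r₀ rs ih =>
    obtain ⟨h₀, hrs⟩ := isDPP_cons_iff.mp hD
    rcases List.mem_cons.mp hr with rfl | hr
    · exact h₀.length_lt
    · exact ih hrs hr

theorem IsDPP.exists_getD_zero_eq_replicate_append {D : List (List ℕ)} {m : ℕ} (hD : IsDPP m D) :
    ∃ c s, (∀ x ∈ s, x < m) ∧ D.getD 0 [] = List.replicate c m ++ s := by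
  cases D with
  | nil => exact ⟨0, [], by simp, rfl⟩
  | cons r rs =>
    obtain ⟨-, hr, hbd⟩ := hD.1 r List.mem_cons_self
    exact exists_eq_replicate_append (List.isChain_iff_pairwise.mp hr) fun x hx => (hbd x hx).2

/-- A first row `r` over `r₂` has at least `forcedTop n r r₂` parts `n` (`forcedTop_le`): a first
row of length `n - 1` must start with `n`, and if `r₂` has `c > 0` parts `n - 1`, these lie below
parts `n` at offsets `1, …, c` of `r`, while `r₂.getD 0 0 ≤ r.length` forces length `n - 1`. -/
def forcedTop (n : ℕ) (r r₂ : List ℕ) : ℕ :=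
  (if r.length = n - 1 then 1 else 0) + r₂.count (n - 1)

theorem rho1D_cons (r : List ℕ) (rs : List (List ℕ)) :
    rho1D n (r :: rs) = r.count n + rho1D n rs := by
  simp [rho1D]

theorem rho2D_cons (r : List ℕ) (rs : List (List ℕ)) :
    rho2D n (r :: rs) = r.count (n - 1) + (if r.length = n - 1 then 1 else 0) + rho2D n rs := by
  by_cases h : r.length = n - 1 <;> simp [rho2D, h] <;> omega

theorem rho1D_eq_zero {D : List (List ℕ)} {m : ℕ} (hD : IsDPP m D) (h : m < n) :
    rho1D n D = 0 := by
  refine List.sum_eq_zero fun c hc => ?_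
  obtain ⟨r, hr, rfl⟩ := List.mem_map.mp hc
  exact List.count_eq_zero.mpr fun hn => by have := ((hD.1 r hr).2.2 n hn).2; omega

theorem rho2D_eq_zero {D : List (List ℕ)} {m : ℕ} (hD : IsDPP m D) (h : m < n - 1) :
    rho2D n D = 0 := by
  induction D with
  | nil => rfl
  | cons r rs ih =>
    have hr := List.mem_cons_self (a := r) (l := rs)
    have hlen := hD.length_lt hr
    rw [rho2D_cons, if_neg (by omega), ih (isDPP_cons_iff.mp hD).2,
      List.count_eq_zero.mpr fun hn => by have := ((hD.1 r hr).2.2 _ hn).2; omega]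

theorem rho1D_cons_of_isDPP {r : List ℕ} {rs : List (List ℕ)} (hD : IsDPP n (r :: rs)) :
    rho1D n (r :: rs) = r.count n := by
  have := (isDPP_cons_iff.mp hD).1.length_lt
  rw [rho1D_cons, rho1D_eq_zero hD.tail (by omega), add_zero]

theorem rho2D_cons_of_isDPP {r : List ℕ} {rs : List (List ℕ)} (hD : IsDPP n (r :: rs)) :
    rho2D n (r :: rs) = r.count (n - 1) + forcedTop n r (rs.getD 0 []) := by
  have := (isDPP_cons_iff.mp hD).1.length_lt
  cases rs with
  | nil =>
    rw [rho2D_cons]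
    simp [forcedTop, rho2D]
  | cons r₂ rs₂ =>
    have h₂ := hD.tail.length_lt List.mem_cons_self
    rw [rho2D_cons, rho2D_cons, if_neg (show r₂.length ≠ n - 1 by omega),
      rho2D_eq_zero hD.tail.tail (by omega)]
    simp only [forcedTop, List.getD_cons_zero]
    omega

theorem nuD_cons (r : List ℕ) (rs : List (List ℕ)) :
    nuD (r :: rs) = ((Finset.range r.length).filter fun k => k < r.getD k 0).card + nuD rs := by
  rw [nuD, List.length_cons, Finset.sum_range_succ', add_comm]
  rfl

theorem muD_cons (r : List ℕ) (rs : List (List ℕ)) :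
    muD (r :: rs) = ((Finset.range r.length).filter fun k => r.getD k 0 ≤ k).card + muD rs := by
  rw [muD, List.length_cons, Finset.sum_range_succ', add_comm]
  rfl

section CappedRows

variable {r r' : List ℕ} {m : ℕ} (hlen : r'.length = r.length) (hm : r.length ≤ m)
  (h : ∀ k, min (r'.getD k 0) m = min (r.getD k 0) m)
include hlen hm h

theorem nuD_cons_congr (rs : List (List ℕ)) : nuD (r' :: rs) = nuD (r :: rs) := by
  rw [nuD_cons, nuD_cons, hlen]
  congr 2
  refine Finset.filter_congr fun k hk => ?_
  have := h k
  rw [Finset.mem_range] at hk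
  omega

theorem muD_cons_congr (rs : List (List ℕ)) : muD (r' :: rs) = muD (r :: rs) := by
  rw [muD_cons, muD_cons, hlen]
  congr 2
  refine Finset.filter_congr fun k hk => ?_
  have := h k
  rw [Finset.mem_range] at hk
  omega

end CappedRows

section FirstRow

variable {a b c : ℕ} {s₂ : List ℕ}

theorem forcedTop_replicate_append (hs₂ : ∀ x ∈ s₂, x < n - 1) (r : List ℕ) :
    forcedTop n r (List.replicate c (n - 1) ++ s₂) =
      (if r.length = n - 1 then 1 else 0) + c := by
  rw [forcedTop, count_replicate_append fun h => (hs₂ _ h).false]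

theorem forcedTop_le (h : IsFirstRow n (topRow n a b s) (List.replicate c (n - 1) ++ s₂))
    (hs : ∀ x ∈ s, x < n - 1) (hs₂ : ∀ x ∈ s₂, x < n - 1) :
    forcedTop n (topRow n a b s) (List.replicate c (n - 1) ++ s₂) ≤ a := by
  have hlen := h.length_lt
  have hpos := List.length_pos_iff.mpr h.1.1
  obtain ⟨-, hhead, hsecond, hcol⟩ := h
  have hcol := hcol (c - 1)
  rw [forcedTop_replicate_append hs₂]
  rw [getD_topRow] at hhead hcol
  rw [getD_replicate_append] at hsecond hcol
  have := getD_lt_of_forall_lt hs (by omega) (0 - (a + b))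
  have := getD_lt_of_forall_lt hs (by omega) (c - 1 + 1 - (a + b))
  have := getD_lt_of_forall_lt hs₂ (by omega) 0
  rw [length_topRow] at *
  split_ifs at * <;> omega

theorem isFirstRow_topRow_of_forcedTop_le
    (h : IsFirstRow n (topRow n a b s) (List.replicate c (n - 1) ++ s₂))
    (hs : ∀ x ∈ s, x < n - 1) (hs₂ : ∀ x ∈ s₂, x < n - 1) (hpq : p + q = a + b)
    (hp : forcedTop n (topRow n a b s) (List.replicate c (n - 1) ++ s₂) ≤ p) :
    IsFirstRow n (topRow n p q s) (List.replicate c (n - 1) ++ s₂) := by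
  have hlen := h.length_lt
  have hpos := List.length_pos_iff.mpr h.1.1
  obtain ⟨⟨-, hpw, hbd⟩, hhead, hsecond, hcol⟩ := h
  rw [forcedTop_replicate_append hs₂] at hp
  rw [length_topRow] at hp hlen hpos hhead hsecond
  have hsr : s ⊆ topRow n a b s := fun x hx => by simp [topRow, hx]
  refine ⟨⟨?_, ?_, ?_⟩, ?_, ?_, fun k hk => ?_⟩
  · rw [← List.length_pos_iff, length_topRow]
    omega
  · exact pairwise_topRow (hpw.sublist (by simp [topRow]))
      (fun x hx => (hs x hx).le)
  · intro x hx
    simp only [topRow, List.mem_append, List.mem_replicate] at hx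
    rcases hx with ⟨-, rfl⟩ | ⟨-, rfl⟩ | hx
    exacts [⟨by omega, le_rfl⟩, ⟨by omega, by omega⟩, hbd x (hsr hx)]
  · rw [getD_topRow, length_topRow, hpq]
    rw [getD_topRow] at hhead
    have := getD_lt_of_forall_lt hs (by omega) (0 - (a + b))
    split_ifs at * <;> omega
  · rwa [length_topRow, hpq]
  · have hcol := hcol k hk
    rw [getD_topRow, hpq]
    rw [getD_topRow] at hcol
    rw [getD_replicate_append] at hk hcol hsecond ⊢
    have := getD_lt_of_forall_lt hs₂ (by omega) (k - c)
    split_ifs at * <;> omega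

theorem forcedTop_topRow_swap {a b e : ℕ} {r₂ : List ℕ}
    (he : forcedTop n (topRow n a b s) r₂ = e) (hea : e ≤ a) :
    forcedTop n (topRow n (b + e) (a - e) s) r₂ = e := by
  simp only [forcedTop, length_topRow] at he ⊢
  rwa [show b + e + (a - e) = a + b by omega]

end FirstRow

def swapFirstRow (n : ℕ) (r r₂ : List ℕ) : List ℕ :=
  topRow n (r.count (n - 1) + forcedTop n r r₂) (r.count n - forcedTop n r r₂)
    (r.drop (r.count n + r.count (n - 1)))

def dswap (n : ℕ) : List (List ℕ) → List (List ℕ)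
  | [] => []
  | r :: rs => swapFirstRow n r (rs.getD 0 []) :: rs

theorem dswap_topRow_cons {a b e : ℕ} (hn : 0 < n) (hs : ∀ x ∈ s, x < n - 1)
    {rs : List (List ℕ)} (he : forcedTop n (topRow n a b s) (rs.getD 0 []) = e) :
    dswap n (topRow n a b s :: rs) = topRow n (b + e) (a - e) s :: rs := by
  rw [dswap, swapFirstRow, count_topRow_self hn hs, count_topRow_sub_one hn hs, drop_topRow, he]

theorem IsDPP.exists_topRow_cons {r : List ℕ} {rs : List (List ℕ)} (hD : IsDPP n (r :: rs)) :
    ∃ a b s e, (∀ x ∈ s, x < n - 1) ∧ r = topRow n a b s ∧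
      forcedTop n r (rs.getD 0 []) = e ∧ e ≤ a := by
  have h₀ := (isDPP_cons_iff.mp hD).1
  obtain ⟨a, b, s, hs, rfl⟩ := exists_eq_topRow hD.pos_of_cons h₀.1.2.1
    fun x hx => (h₀.1.2.2 x hx).2
  obtain ⟨c, s₂, hs₂, h₂⟩ := hD.tail.exists_getD_zero_eq_replicate_append
  rw [h₂] at h₀ ⊢
  exact ⟨a, b, s, _, hs, rfl, rfl, forcedTop_le h₀ hs hs₂⟩

theorem IsDPP.dswap {D : List (List ℕ)} (hD : IsDPP n D) : IsDPP n (dswap n D) := by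
  cases D with
  | nil => exact hD
  | cons r rs =>
    obtain ⟨a, b, s, e, hs, rfl, rfl, he⟩ := hD.exists_topRow_cons
    obtain ⟨c, s₂, hs₂, h₂⟩ := hD.tail.exists_getD_zero_eq_replicate_append
    obtain ⟨h₀, hrs⟩ := isDPP_cons_iff.mp hD
    rw [dswap_topRow_cons hD.pos_of_cons hs rfl, isDPP_cons_iff, h₂]
    rw [h₂] at h₀ he
    exact ⟨isFirstRow_topRow_of_forcedTop_le h₀ hs hs₂ (by omega) (by omega), hrs⟩

theorem dswap_dswap {D : List (List ℕ)} (hD : IsDPP n D) : dswap n (dswap n D) = D := by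
  cases D with
  | nil => rfl
  | cons r rs =>
    obtain ⟨a, b, s, e, hs, rfl, he, hea⟩ := hD.exists_topRow_cons
    rw [dswap_topRow_cons hD.pos_of_cons hs he,
      dswap_topRow_cons hD.pos_of_cons hs (forcedTop_topRow_swap he hea)]
    congr 2 <;> omega

theorem nuD_dswap {D : List (List ℕ)} (hD : IsDPP n D) : nuD (dswap n D) = nuD D := by
  cases D with
  | nil => rfl
  | cons r rs =>
    obtain ⟨a, b, s, e, hs, rfl, he, hea⟩ := hD.exists_topRow_cons
    rw [dswap_topRow_cons hD.pos_of_cons hs he]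
    exact nuD_cons_congr (by simp only [length_topRow]; omega)
      (Nat.le_sub_one_of_lt (isDPP_cons_iff.mp hD).1.length_lt) (min_getD_topRow (by omega)) rs

theorem muD_dswap {D : List (List ℕ)} (hD : IsDPP n D) : muD (dswap n D) = muD D := by
  cases D with
  | nil => rfl
  | cons r rs =>
    obtain ⟨a, b, s, e, hs, rfl, he, hea⟩ := hD.exists_topRow_cons
    rw [dswap_topRow_cons hD.pos_of_cons hs he]
    exact muD_cons_congr (by simp only [length_topRow]; omega)
      (Nat.le_sub_one_of_lt (isDPP_cons_iff.mp hD).1.length_lt) (min_getD_topRow (by omega)) rs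

theorem rho1D_dswap {D : List (List ℕ)} (hD : IsDPP n D) : rho1D n (dswap n D) = rho2D n D := by
  cases D with
  | nil => rfl
  | cons r rs =>
    obtain ⟨a, b, s, e, hs, rfl, he, -⟩ := hD.exists_topRow_cons
    have hD' := hD.dswap
    rw [dswap_topRow_cons hD.pos_of_cons hs he] at hD' ⊢
    rw [rho1D_cons_of_isDPP hD', rho2D_cons_of_isDPP hD, count_topRow_self hD.pos_of_cons hs,
      count_topRow_sub_one hD.pos_of_cons hs, he]

theorem rho2D_dswap {D : List (List ℕ)} (hD : IsDPP n D) : rho2D n (dswap n D) = rho1D n D := by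
  cases D with
  | nil => rfl
  | cons r rs =>
    obtain ⟨a, b, s, e, hs, rfl, he, hea⟩ := hD.exists_topRow_cons
    have hD' := hD.dswap
    rw [dswap_topRow_cons hD.pos_of_cons hs he] at hD' ⊢
    rw [rho2D_cons_of_isDPP hD', rho1D_cons_of_isDPP hD, count_topRow_self hD.pos_of_cons hs,
      count_topRow_sub_one hD.pos_of_cons hs, forcedTop_topRow_swap he hea]
    omega

end

theorem ZDPP2_symm_general {R : Type*} [CommRing R] (n : ℕ) :
    (∀ x y z₁ z₂ : R, ZDPP2 n x y z₁ z₂ = ZDPP2 n x y z₂ z₁) ∧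
    (∀ p m k₁ k₂ : ℤ,
      {D ∈ DPPs n | (nuD D : ℤ) = p ∧ (muD D : ℤ) = m ∧ (rho1D n D : ℤ) = k₁ ∧
        (rho2D n D : ℤ) = k₂}.ncard =
      {D ∈ DPPs n | (nuD D : ℤ) = p ∧ (muD D : ℤ) = m ∧ (rho1D n D : ℤ) = k₂ ∧
        (rho2D n D : ℤ) = k₁}.ncard) := by
  have hinv : Set.InvOn (dswap n) (dswap n) (DPPs n) (DPPs n) :=
    ⟨fun _ hD => dswap_dswap hD, fun _ hD => dswap_dswap hD⟩
  refine ⟨fun x y z₁ z₂ => ?_, fun p m k₁ k₂ => ?_⟩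
  · refine finsum_mem_eq_of_bijOn (dswap n) (hinv.bijOn (fun _ hD => hD.dswap)
      (fun _ hD => hD.dswap)) fun D hD => ?_
    rw [nuD_dswap hD, muD_dswap hD, rho1D_dswap hD, rho2D_dswap hD]
    ring
  · have hmaps : ∀ k₁ k₂ : ℤ, Set.MapsTo (dswap n)
        {D ∈ DPPs n | (nuD D : ℤ) = p ∧ (muD D : ℤ) = m ∧ (rho1D n D : ℤ) = k₁ ∧
          (rho2D n D : ℤ) = k₂}
        {D ∈ DPPs n | (nuD D : ℤ) = p ∧ (muD D : ℤ) = m ∧ (rho1D n D : ℤ) = k₂ ∧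
          (rho2D n D : ℤ) = k₁} := by
      rintro k₁ k₂ D ⟨hD, hp, hm, h₁, h₂⟩
      exact ⟨hD.dswap, by rwa [nuD_dswap hD], by rwa [muD_dswap hD], by rwa [rho1D_dswap hD],
        by rwa [rho2D_dswap hD]⟩
    exact ((hinv.mono (fun _ hD => hD.1) fun _ hD => hD.1).bijOn (hmaps k₁ k₂)
      (hmaps k₂ k₁)).ncard_eq

/-- The doubly-refined DPP generating function is symmetric in `z₁` and `z₂`;
equivalently, the joint distribution of `(ν, μ, ρ₁, ρ₂)` on `DPP(n)` is symmetric
under exchanging the values of `ρ₁` and `ρ₂`. -/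
theorem ZDPP2_symm {R : Type*} [CommRing R] (n : ℕ) (hn : 1 ≤ n) :
    (∀ x y z₁ z₂ : R, ZDPP2 n x y z₁ z₂ = ZDPP2 n x y z₂ z₁) ∧
    (∀ p m k₁ k₂ : ℤ,
      {D ∈ DPPs n | (nuD D : ℤ) = p ∧ (muD D : ℤ) = m ∧ (rho1D n D : ℤ) = k₁ ∧
        (rho2D n D : ℤ) = k₂}.ncard =
      {D ∈ DPPs n | (nuD D : ℤ) = p ∧ (muD D : ℤ) = m ∧ (rho1D n D : ℤ) = k₂ ∧
        (rho2D n D : ℤ) = k₁}.ncard) :=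
  ZDPP2_symm_general n

end ASMDPP
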